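/- Consider the first-order path-conservative update Q_i^{n+1} = Q_i^n − (Δt/Δr)( D^+_{i−1/2} + D^-_{i+1/2} ), where D^±_{i+1/2} = ½( f(q_{i+1}) − f(q_i) + B_{i+1/2}(q_{i+1}−q_i) ± V_{i+1/2}(q_{i+1}−q_i) ) and V is either the Osher–Romberg viscosity or the well balanced HLL viscosity. Suppose the initial cell states lie exactly on a prescribed stationary solution, Q_i^0 = Q^E(r_i) for all cells i ∈ {1,…,N}, and the boundary (ghost) states at every time step are also given by Q^E at the corresponding radii. Then for every n ≥ 0 and every cell i, Q_i^n = Q^E(r_i): the scheme preserves the stationary solution exactly for all times and any time step Δt. -/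
import Mathlib


/-! One-dimensional well balanced path-conservative finite volume scheme for
the cylindrical Euler system with gravity, acting on the conserved variables
`q = (rρ, rρu, rρv, rρE, r) ∈ ℝ⁵`.  The primitive variables are recovered as
`ρ = q₀/q₄`, `u = q₁/q₀`, `v = q₂/q₀`, `E = q₃/q₀`. -/

/-- Pressure of a conserved state vector. -/
noncomputable def presQ (γ : ℝ) (q : Fin 5 → ℝ) : ℝ :=
  (γ - 1) * (q 0 / q 4) * (q 3 / q 0 - ((q 1 / q 0) ^ 2 + (q 2 / q 0) ^ 2) / 2)

/-- Flux `f(q) = (rρu, rρu², rρuv, ru(ρE+P), 0)` of a conserved state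
vector. -/
noncomputable def fQ (γ : ℝ) (q : Fin 5 → ℝ) : Fin 5 → ℝ :=
  ![q 1, q 1 * (q 1 / q 0), q 1 * (q 2 / q 0),
    q 4 * (q 1 / q 0) * ((q 0 / q 4) * (q 3 / q 0) + presQ γ q), 0]

/-- Conserved vector `Q^E(r) = (rρ^E, 0, rρ^E v^E, rρ^E E^E, r)` of the
prescribed stationary solution at radius `r`. -/
def QE (ρE vE EE : ℝ → ℝ) (r : ℝ) : Fin 5 → ℝ :=
  ![r * ρE r, 0, r * ρE r * vE r, r * ρE r * EE r, r]

/-- Equilibrium pressure `P^E(r) = (γ-1)ρ^E(E^E - (v^E)²/2)`. -/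
noncomputable def presE (γ : ℝ) (ρE vE EE : ℝ → ℝ) (r : ℝ) : ℝ :=
  (γ - 1) * ρE r * (EE r - (vE r) ^ 2 / 2)

/-- Nonconservative jump term `B(q_b - q_a) = (0, b₂, b₃, b₄, 0)`, built from
the fluctuations `P^f`, `(rρ)^f`, `(ζ_r)^f` relative to the stationary
solution, with arithmetic-mean interface values and given (arbitrary)
interface values `rρEh = (rρ)^E_{1/2}`, `ζrh = (ζ_r)_{1/2}`. -/
noncomputable def BjumpQ (γ G ms : ℝ) (ρE vE EE : ℝ → ℝ) (rρEh ζrh : ℝ)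
    (qa qb : Fin 5 → ℝ) : Fin 5 → ℝ :=
  ![0,
    ((qa 4 + qb 4) / 2) * ((presQ γ qb - presE γ ρE vE EE (qb 4))
        - (presQ γ qa - presE γ ρE vE EE (qa 4)))
      + (rρEh * ((((vE (qa 4)) ^ 2 - (qa 2 / qa 0) ^ 2) / qa 4
            + ((vE (qb 4)) ^ 2 - (qb 2 / qb 0) ^ 2) / qb 4) / 2)
          + (((qa 0 - qa 4 * ρE (qa 4)) + (qb 0 - qb 4 * ρE (qb 4))) / 2) * ζrh)
        * (qb 4 - qa 4),
    (((qa 1 + qb 1) / 2) / ((qa 4 + qb 4) / 2))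
      * ((qa 2 / qa 0 + qb 2 / qb 0) / 2) * (qb 4 - qa 4),
    ((qa 1 + qb 1) / 2) * (G * ms / ((qa 4 + qb 4) / 2) ^ 2) * (qb 4 - qa 4),
    0]


lemma presQ_QE (γ : ℝ) (ρE vE EE : ℝ → ℝ) (r : ℝ) (hr : 0 < r) (hρ : 0 < ρE r) :
    presQ γ (QE ρE vE EE r) = presE γ ρE vE EE r := by
  have h0 : r * ρE r ≠ 0 := by positivity
  simp only [presQ, presE, QE, Matrix.cons_val_zero, Matrix.cons_val_one,
    Matrix.head_cons, Matrix.cons_val_two, Matrix.tail_cons, Matrix.cons_val_three,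
    Matrix.cons_val_four]
  field_simp
  try ring

lemma fQ_QE (γ : ℝ) (ρE vE EE : ℝ → ℝ) (r : ℝ) :
    fQ γ (QE ρE vE EE r) = 0 := by
  funext j
  fin_cases j <;> simp [fQ, QE]

lemma BjumpQ_QE (γ G ms : ℝ) (ρE vE EE : ℝ → ℝ) (c₁ c₂ : ℝ) (ra rb : ℝ)
    (hra : 0 < ra) (hrb : 0 < rb) (hρa : 0 < ρE ra) (hρb : 0 < ρE rb) :
    BjumpQ γ G ms ρE vE EE c₁ c₂ (QE ρE vE EE ra) (QE ρE vE EE rb) = 0 := by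
  have ha : ra * ρE ra ≠ 0 := by positivity
  have hb : rb * ρE rb ≠ 0 := by positivity
  have hva : ra * ρE ra * vE ra / (ra * ρE ra) = vE ra := by field_simp
  have hvb : rb * ρE rb * vE rb / (rb * ρE rb) = vE rb := by field_simp
  have hpa := presQ_QE γ ρE vE EE ra hra hρa
  have hpb := presQ_QE γ ρE vE EE rb hrb hρb
  simp only [QE] at hpa hpb
  funext j
  fin_cases j <;> simp [BjumpQ, QE, hpa, hpb, hva, hvb]

/-- exact preservation of stationary solutions by the
first-order path-conservative scheme
`Q_i^{n+1} = Q_i^n - (Δt/Δr)(D^+_{i-1/2} + D^-_{i+1/2})` with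
`D^±_{i+1/2} = ½(f(q_{i+1}) - f(q_i) + B_{i+1/2}(q_{i+1}-q_i) ± V_{i+1/2})`,
where the viscosity `V` (the Osher–Romberg viscosity or the well balanced HLL
viscosity) vanishes whenever the two adjacent states lie on the prescribed
stationary solution.  If the initial cell states and the ghost states at every
time step are given by `Q^E` at the corresponding radii, then `Q_i^n =
Q^E(r_i)` for every `n ≥ 0` and every cell `i`, for any time step `Δt`. -/
theorem first_order_wb_scheme_preserves_equilibrium
    (γ G ms Δt Δr : ℝ) (hγ : 1 < γ)
    (ρE vE EE : ℝ → ℝ) (hρE : ∀ x : ℝ, 0 < ρE x)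
    (N : ℤ) (r : ℤ → ℝ) (hr : ∀ i : ℤ, 0 < r i)
    (Q : ℕ → ℤ → Fin 5 → ℝ)
    -- viscosity at the interface between cells i and i+1 at time step n:
    -- Osher–Romberg or well balanced HLL, both of which vanish when the two
    -- adjacent states lie on the same stationary solution
    (V : ℕ → ℤ → Fin 5 → ℝ)
    (hV : ∀ (n : ℕ) (i : ℤ), Q n i = QE ρE vE EE (r i) →
      Q n (i + 1) = QE ρE vE EE (r (i + 1)) → V n i = 0)
    -- (arbitrary) interface values of the B-terms at each interface
    (c₁ c₂ : ℕ → ℤ → ℝ)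
    -- initial data on the stationary solution
    (hinit : ∀ i : ℤ, Q 0 i = QE ρE vE EE (r i))
    -- ghost states given by the stationary solution at every time step
    (hghost : ∀ (n : ℕ) (i : ℤ), i < 1 ∨ N < i → Q n i = QE ρE vE EE (r i))
    -- the first-order path-conservative update in the interior cells
    (hscheme : ∀ (n : ℕ) (i : ℤ), 1 ≤ i → i ≤ N →
      Q (n + 1) i = Q n i - (Δt / Δr) •
        ((1 / 2 : ℝ) • (fQ γ (Q n i) - fQ γ (Q n (i - 1))
            + BjumpQ γ G ms ρE vE EE (c₁ n (i - 1)) (c₂ n (i - 1))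
                (Q n (i - 1)) (Q n i)
            + V n (i - 1))
          + (1 / 2 : ℝ) • (fQ γ (Q n (i + 1)) - fQ γ (Q n i)
            + BjumpQ γ G ms ρE vE EE (c₁ n i) (c₂ n i) (Q n i) (Q n (i + 1))
            - V n i))) :
    ∀ (n : ℕ) (i : ℤ), Q n i = QE ρE vE EE (r i) := by
  intro n
  induction n with
  | zero => exact hinit
  | succ n ih =>
    intro i
    by_cases hi : 1 ≤ i ∧ i ≤ N
    · rw [hscheme n i hi.1 hi.2, ih i, ih (i - 1), ih (i + 1),
        hV n (i - 1) (ih (i - 1)) (by simpa using ih i),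
        hV n i (ih i) (ih (i + 1)),
        fQ_QE, fQ_QE, fQ_QE,
        BjumpQ_QE γ G ms ρE vE EE _ _ _ _ (hr (i - 1)) (hr i)
          (hρE _) (hρE _),
        BjumpQ_QE γ G ms ρE vE EE _ _ _ _ (hr i) (hr (i + 1))
          (hρE _) (hρE _)]
      simp
    · exact hghost (n + 1) i (by omega)
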